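/- For arbitrary fuzzy automata 𝓐, 𝓑 and 𝓒 over a complete residuated lattice 𝓛 and alphabet X, UFB-equivalence is an equivalence: (1) 𝓐 is UFB-equivalent to 𝓐; (2) if 𝓐 is UFB-equivalent to 𝓑 then 𝓑 is UFB-equivalent to 𝓐; (3) if 𝓐 is UFB-equivalent to 𝓑 and 𝓑 is UFB-equivalent to 𝓒, then 𝓐 is UFB-equivalent to 𝓒. -/
import Mathlib


universe u

/-- A complete residuated lattice: a complete lattice with a commutative monoid
structure whose unit is the top element, together with a residuum operation
forming an adjoint pair with the multiplication. -/
class CompleteResiduatedLattice (L : Type*) extends CompleteLattice L, CommMonoid L where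
  /-- the residuum operation `→` -/
  res : L → L → L
  /-- the adjunction property -/
  adjunction : ∀ x y z : L, x * y ≤ z ↔ x ≤ res y z
  /-- the multiplicative unit `1` is the greatest element -/
  one_eq_top : (1 : L) = ⊤

namespace FuzzyAutomataBisim

/-- A fuzzy automaton over `L` and alphabet `X`, with state set `A`. -/
structure FuzzyAutomaton (L : Type*) [CompleteResiduatedLattice L] (X A : Type*) where
  δ : A → X → A → L
  σ : A → L
  τ : A → L

variable {L X A B C : Type*} [CompleteResiduatedLattice L]

/-- biresiduum `x ↔ y = (x → y) ⊓ (y → x)` -/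
def bires (x y : L) : L :=
  CompleteResiduatedLattice.res x y ⊓ CompleteResiduatedLattice.res y x

/-- inverse of a fuzzy relation -/
def inv (φ : A → B → L) : B → A → L := fun b a => φ a b

/-- composition of fuzzy relations -/
def rcomp (φ : A → B → L) (ψ : B → C → L) : A → C → L := fun a c => ⨆ b, φ a b * ψ b c

/-- composition of a fuzzy set with a fuzzy relation -/
def scomp (f : A → L) (φ : A → B → L) : B → L := fun b => ⨆ a, f a * φ a b

/-- composition of a fuzzy relation with a fuzzy set -/
def rscomp (φ : A → B → L) (g : B → L) : A → L := fun a => ⨆ b, φ a b * g b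

/-- degree of overlapping of two fuzzy sets -/
def sdot (f g : A → L) : L := ⨆ a, f a * g a

/-- kernel `E_A^φ` of a fuzzy relation -/
def ker (φ : A → B → L) : A → A → L := fun a₁ a₂ => ⨅ b, bires (φ a₁ b) (φ a₂ b)

/-- co-kernel `E_B^φ` of a fuzzy relation -/
def coker (φ : A → B → L) : B → B → L := fun b₁ b₂ => ⨅ a, bires (φ a b₁) (φ a b₂)

/-- `φ` is an `L`-function -/
def IsLFun (φ : A → B → L) : Prop := ∀ a, ∃ b, φ a b = 1

/-- `φ` is surjective, i.e. `φ⁻¹` is an `L`-function -/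
def IsSurj (φ : A → B → L) : Prop := ∀ b, ∃ a, φ a b = 1

/-- `φ` is a partial fuzzy function: `φ ∘ φ⁻¹ ∘ φ ≤ φ` -/
def IsPFF (φ : A → B → L) : Prop := rcomp (rcomp φ (inv φ)) φ ≤ φ

/-- `φ` is a uniform fuzzy relation: a partial fuzzy function that is a
surjective `L`-function -/
def IsUniform (φ : A → B → L) : Prop := IsPFF φ ∧ IsLFun φ ∧ IsSurj φ

/-- the set of crisp descriptions of `φ` -/
def CR (φ : A → B → L) : Set (A → B) := {ψ | ∀ a, φ a (ψ a) = 1}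

/-- `ψ : A → B` is `F`-surjective -/
def SurjMod (F : B → B → L) (ψ : A → B) : Prop := ∀ b, ∃ a, F (ψ a) b = 1

/-- fuzzy equivalence relation -/
structure IsFuzzyEquiv (E : A → A → L) : Prop where
  refl : ∀ a, E a a = 1
  symm : ∀ a b, E a b = E b a
  trans : ∀ a b c, E a b * E b c ≤ E a c

/-- fuzzy equality -/
def IsFuzzyEquality (E : A → A → L) : Prop :=
  IsFuzzyEquiv E ∧ ∀ a b, E a b = 1 → a = b

/-- the factor set `A/E = {E_a : a ∈ A}` -/
abbrev FactorSet (E : A → A → L) := {f : A → L // ∃ a, E a = f}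

/-- the class `E_a` as an element of `A/E` -/
def toClass (E : A → A → L) (a : A) : FactorSet E := ⟨E a, a, rfl⟩

/-- a chosen representative of a class -/
noncomputable def rep {E : A → A → L} (c : FactorSet E) : A := c.2.choose

/-- the fuzzy relation `Ẽ` on `A/E` -/
noncomputable def tildeRel (E : A → A → L) : FactorSet E → FactorSet E → L :=
  fun c c' => E (rep c) (rep c')

open Classical in
/-- a chosen crisp description of `φ` -/
noncomputable def crispDesc [Nonempty B] (φ : A → B → L) : A → B :=
  fun a => if h : ∃ b, φ a b = 1 then h.choose else Classical.arbitrary B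

/-- the induced map `φ̃ : A/E_A^φ → B/E_B^φ`, `φ̃(E_a) = F_{ψ(a)}` -/
noncomputable def tilde [Nonempty B] (φ : A → B → L) :
    FactorSet (ker φ) → FactorSet (coker φ) :=
  fun c => toClass (coker φ) (crispDesc φ (rep c))

/-- the fuzzy transition relation `δ_x` -/
def FuzzyAutomaton.δx (M : FuzzyAutomaton L X A) (x : X) : A → A → L := fun a b => M.δ a x b

open Classical in
/-- transitions extended to words -/
noncomputable def deltaWord (M : FuzzyAutomaton L X A) : List X → A → A → L
  | [] => fun a b => if a = b then (1 : L) else ⊥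
  | x :: u => rcomp (M.δx x) (deltaWord M u)

/-- the fuzzy language recognized by `M` : `L(M)(u) = σ ∘ δ_u ∘ τ` -/
noncomputable def lang (M : FuzzyAutomaton L X A) (u : List X) : L :=
  sdot (scomp M.σ (deltaWord M u)) M.τ

/-- forward simulation -/
def IsForwardSim (MA : FuzzyAutomaton L X A) (MB : FuzzyAutomaton L X B)
    (φ : A → B → L) : Prop :=
  MA.σ ≤ scomp MB.σ (inv φ) ∧
  (∀ x, rcomp (inv φ) (MA.δx x) ≤ rcomp (MB.δx x) (inv φ)) ∧
  rscomp (inv φ) MA.τ ≤ MB.τ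

/-- backward simulation -/
def IsBackwardSim (MA : FuzzyAutomaton L X A) (MB : FuzzyAutomaton L X B)
    (φ : A → B → L) : Prop :=
  scomp MA.σ φ ≤ MB.σ ∧
  (∀ x, rcomp (MA.δx x) φ ≤ rcomp φ (MB.δx x)) ∧
  MA.τ ≤ rscomp φ MB.τ

/-- forward bisimulation -/
def IsForwardBisim (MA : FuzzyAutomaton L X A) (MB : FuzzyAutomaton L X B)
    (φ : A → B → L) : Prop :=
  IsForwardSim MA MB φ ∧ IsForwardSim MB MA (inv φ)

/-- backward bisimulation -/
def IsBackwardBisim (MA : FuzzyAutomaton L X A) (MB : FuzzyAutomaton L X B)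
    (φ : A → B → L) : Prop :=
  IsBackwardSim MA MB φ ∧ IsBackwardSim MB MA (inv φ)

/-- backward-forward bisimulation -/
def IsBFBisim (MA : FuzzyAutomaton L X A) (MB : FuzzyAutomaton L X B)
    (φ : A → B → L) : Prop :=
  IsBackwardSim MA MB φ ∧ IsForwardSim MB MA (inv φ)

/-- forward-backward bisimulation -/
def IsFBBisim (MA : FuzzyAutomaton L X A) (MB : FuzzyAutomaton L X B)
    (φ : A → B → L) : Prop :=
  IsForwardSim MA MB φ ∧ IsBackwardSim MB MA (inv φ)

/-- isomorphism of fuzzy automata -/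
def IsIso (MA : FuzzyAutomaton L X A) (MB : FuzzyAutomaton L X B) (h : A → B) : Prop :=
  Function.Bijective h ∧
  (∀ (a₁ : A) (x : X) (a₂ : A), MA.δ a₁ x a₂ = MB.δ (h a₁) x (h a₂)) ∧
  (∀ a, MA.σ a = MB.σ (h a)) ∧
  (∀ a, MA.τ a = MB.τ (h a))

/-- the factor fuzzy automaton `𝓐/E` -/
noncomputable def factorAut (M : FuzzyAutomaton L X A) (E : A → A → L) :
    FuzzyAutomaton L X (FactorSet E) where
  δ := fun c x c' => rcomp (rcomp E (M.δx x)) E (rep c) (rep c')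
  σ := fun c => scomp M.σ E (rep c)
  τ := fun c => rscomp E M.τ (rep c)

/-- the natural fuzzy relation `φ(a₁, E_{a₂}) = E(a₁,a₂)` between `A` and `A/E` -/
def natRel (E : A → A → L) : A → FactorSet E → L := fun a c => c.1 a

/-- the fuzzy relation `G/E` on `A/E` -/
noncomputable def quotRel (E G : A → A → L) : FactorSet E → FactorSet E → L :=
  fun c c' => G (rep c) (rep c')

/-- the fuzzy relation `φ(a₁, E_{a₂}) = G(a₁,a₂)` between `A` and `A/E` -/
noncomputable def quotNatRel (E G : A → A → L) : A → FactorSet E → L :=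
  fun a c => G a (rep c)

/-- UFB-equivalence of fuzzy automata -/
def UFBEquiv (MA : FuzzyAutomaton L X A) (MB : FuzzyAutomaton L X B) : Prop :=
  ∃ φ : A → B → L, IsUniform φ ∧ IsForwardBisim MA MB φ

section AuxProofs

open CompleteResiduatedLattice

variable {L : Type*} [CompleteResiduatedLattice L] {A B C D : Type*}

lemma fmul_mono {x x' y y' : L} (hx : x ≤ x') (hy : y ≤ y') : x * y ≤ x' * y' := by
  have key : ∀ a b c : L, a ≤ b → a * c ≤ b * c := by
    intro a b c h
    exact (adjunction _ _ _).mpr (h.trans ((adjunction _ _ _).mp le_rfl))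
  calc x * y ≤ x' * y := key _ _ _ hx
    _ = y * x' := mul_comm _ _
    _ ≤ y' * x' := key _ _ _ hy
    _ = x' * y' := mul_comm _ _

lemma fle_one (x : L) : x ≤ 1 := one_eq_top (L := L) ▸ le_top

lemma fone_of_le {x : L} (h : 1 ≤ x) : x = 1 := le_antisymm (fle_one x) h

lemma fbot_mul (x : L) : (⊥ : L) * x = ⊥ :=
  le_antisymm ((adjunction _ _ _).mpr bot_le) bot_le

lemma fmul_bot (x : L) : x * (⊥ : L) = ⊥ := by rw [mul_comm]; exact fbot_mul x

lemma fiSup_mul {ι : Sort*} (f : ι → L) (y : L) : (⨆ i, f i) * y = ⨆ i, f i * y := by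
  apply le_antisymm
  · rw [adjunction]
    exact iSup_le fun i => (adjunction _ _ _).mp (le_iSup (fun i => f i * y) i)
  · exact iSup_le fun i => fmul_mono (le_iSup f i) le_rfl

lemma fmul_iSup {ι : Sort*} (x : L) (f : ι → L) : (x * ⨆ i, f i) = ⨆ i, x * f i := by
  rw [mul_comm, fiSup_mul]
  exact iSup_congr fun i => mul_comm _ _

lemma fsup_mul (x y z : L) : (x ⊔ y) * z = x * z ⊔ y * z := by
  apply le_antisymm
  · rw [adjunction]
    exact sup_le ((adjunction _ _ _).mp le_sup_left) ((adjunction _ _ _).mp le_sup_right)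
  · exact sup_le (fmul_mono le_sup_left le_rfl) (fmul_mono le_sup_right le_rfl)

lemma rcomp_assoc (φ : A → B → L) (ψ : B → C → L) (χ : C → D → L) :
    rcomp (rcomp φ ψ) χ = rcomp φ (rcomp ψ χ) := by
  funext a d
  simp only [rcomp, fiSup_mul, fmul_iSup, mul_assoc]
  exact iSup_comm

lemma rcomp_mono {φ φ' : A → B → L} {ψ ψ' : B → C → L} (h1 : φ ≤ φ') (h2 : ψ ≤ ψ') :
    rcomp φ ψ ≤ rcomp φ' ψ' := by
  intro a c
  exact iSup_mono fun b => fmul_mono (h1 a b) (h2 b c)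

lemma inv_rcomp (φ : A → B → L) (ψ : B → C → L) :
    inv (rcomp φ ψ) = rcomp (inv ψ) (inv φ) := by
  funext c a
  simp only [inv, rcomp]
  exact iSup_congr fun b => mul_comm _ _

lemma finv_mono {φ φ' : A → B → L} (h : φ ≤ φ') : inv φ ≤ inv φ' := by
  intro b a; exact h a b

lemma scomp_assoc (f : A → L) (φ : A → B → L) (ψ : B → C → L) :
    scomp (scomp f φ) ψ = scomp f (rcomp φ ψ) := by
  funext c
  simp only [scomp, rcomp, fiSup_mul, fmul_iSup, mul_assoc]
  exact iSup_comm

lemma scomp_mono {f f' : A → L} {φ φ' : A → B → L} (h1 : f ≤ f') (h2 : φ ≤ φ') :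
    scomp f φ ≤ scomp f' φ' := by
  intro b; exact iSup_mono fun a => fmul_mono (h1 a) (h2 a b)

lemma rscomp_assoc (φ : A → B → L) (ψ : B → C → L) (g : C → L) :
    rscomp (rcomp φ ψ) g = rscomp φ (rscomp ψ g) := by
  funext a
  simp only [rscomp, rcomp, fiSup_mul, fmul_iSup, mul_assoc]
  exact iSup_comm

lemma rscomp_mono {φ φ' : A → B → L} {g g' : B → L} (h1 : φ ≤ φ') (h2 : g ≤ g') :
    rscomp φ g ≤ rscomp φ' g' := by
  intro a; exact iSup_mono fun b => fmul_mono (h1 a b) (h2 b)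

lemma rcomp_sup_left (E F : A → B → L) (ρ : B → C → L) :
    rcomp (E ⊔ F) ρ = rcomp E ρ ⊔ rcomp F ρ := by
  funext a c
  show (⨆ b, (E a b ⊔ F a b) * ρ b c) = _
  simp only [fsup_mul]
  exact iSup_sup_eq

lemma rscomp_sup_left (E F : A → A → L) (g : A → L) :
    rscomp (E ⊔ F) g = rscomp E g ⊔ rscomp F g := by
  funext a
  show (⨆ b, (E a b ⊔ F a b) * g b) = _
  simp only [fsup_mul]
  exact iSup_sup_eq

/-- reflexivity of a fuzzy relation -/
def Refl1 (G : B → B → L) : Prop := ∀ b, G b b = 1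

lemma le_rcomp_of_refl {G : B → B → L} (hG : Refl1 G) (ρ : B → C → L) :
    ρ ≤ rcomp G ρ := by
  intro b c
  calc ρ b c = G b b * ρ b c := by rw [hG b, one_mul]
    _ ≤ _ := le_iSup (fun b' => G b b' * ρ b' c) b

lemma le_rcomp_of_refl' {G : B → B → L} (hG : Refl1 G) (ρ : A → B → L) :
    ρ ≤ rcomp ρ G := by
  intro a b
  calc ρ a b = ρ a b * G b b := by rw [hG b, mul_one]
    _ ≤ _ := le_iSup (fun b' => ρ a b' * G b' b) b

open Classical in
/-- the identity (equality) fuzzy relation -/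
noncomputable def fdiag : A → A → L := fun a b => if a = b then 1 else ⊥

lemma fdiag_refl : Refl1 (fdiag (A := A) (L := L)) := fun a => by simp [fdiag]

lemma fdiag_rcomp (ρ : A → B → L) : rcomp fdiag ρ = ρ := by
  funext a b
  apply le_antisymm
  · refine iSup_le fun a' => ?_
    by_cases h : a = a'
    · subst h; simp [fdiag]
    · simp [fdiag, h, fbot_mul]
  · exact le_rcomp_of_refl fdiag_refl ρ a b

lemma rcomp_fdiag (ρ : A → B → L) : rcomp ρ fdiag = ρ := by
  funext a b
  apply le_antisymm
  · refine iSup_le fun b' => ?_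
    by_cases h : b' = b
    · subst h; simp [fdiag]
    · simp [fdiag, h, fmul_bot]
  · exact le_rcomp_of_refl' fdiag_refl ρ a b

lemma scomp_fdiag (f : A → L) : scomp f fdiag = f := by
  funext a
  apply le_antisymm
  · refine iSup_le fun a' => ?_
    by_cases h : a' = a
    · subst h; simp [fdiag]
    · simp [fdiag, h, fmul_bot]
  · calc f a = f a * fdiag a a := by rw [fdiag_refl a, mul_one]
      _ ≤ _ := le_iSup (fun a' => f a' * fdiag a' a) a

lemma fdiag_rscomp (g : A → L) : rscomp fdiag g = g := by
  funext a
  apply le_antisymm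
  · refine iSup_le fun a' => ?_
    by_cases h : a = a'
    · subst h; simp [fdiag]
    · simp [fdiag, h, fbot_mul]
  · calc g a = fdiag a a * g a := by rw [fdiag_refl a, one_mul]
      _ ≤ _ := le_iSup (fun a' => fdiag a a' * g a') a

lemma inv_fdiag : inv (fdiag (A := A) (L := L)) = fdiag := by
  funext a b
  show fdiag b a = fdiag a b
  by_cases h : a = b
  · subst h; rfl
  · simp only [fdiag, if_neg h, if_neg (Ne.symm h)]

/-- powers of a fuzzy relation -/
def pw (H : B → B → L) : ℕ → (B → B → L)
  | 0 => H
  | n + 1 => rcomp (pw H n) H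

/-- transitive closure of a fuzzy relation -/
noncomputable def ftc (H : B → B → L) : B → B → L := fun b b' => ⨆ n, pw H n b b'

lemma pw_le_ftc (H : B → B → L) (n : ℕ) : pw H n ≤ ftc H := by
  intro b b'; exact le_iSup (fun n => pw H n b b') n

lemma rcomp_pw (H : B → B → L) (n : ℕ) : rcomp H (pw H n) = pw H (n + 1) := by
  induction n with
  | zero => rfl
  | succ n ih =>
    show rcomp H (rcomp (pw H n) H) = rcomp (pw H (n + 1)) H
    rw [← rcomp_assoc, ih]

lemma pw_comp (H : B → B → L) (n m : ℕ) :
    rcomp (pw H n) (pw H m) = pw H (n + m + 1) := by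
  induction m with
  | zero => rfl
  | succ m ih =>
    show rcomp (pw H n) (rcomp (pw H m) H) = _
    rw [← rcomp_assoc, ih]
    rfl

lemma pw_symm {H : B → B → L} (hs : inv H = H) (n : ℕ) : inv (pw H n) = pw H n := by
  induction n with
  | zero => exact hs
  | succ n ih =>
    show inv (rcomp (pw H n) H) = _
    rw [inv_rcomp, hs, ih, rcomp_pw]

lemma ftc_symm {H : B → B → L} (hs : inv H = H) : inv (ftc H) = ftc H := by
  funext b b'
  show ⨆ n, pw H n b' b = ⨆ n, pw H n b b'
  exact iSup_congr fun n => congrFun (congrFun (pw_symm hs n) b) b'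

lemma ftc_trans (H : B → B → L) : rcomp (ftc H) (ftc H) ≤ ftc H := by
  intro b b''
  refine iSup_le fun b' => ?_
  show (⨆ n, pw H n b b') * (⨆ m, pw H m b' b'') ≤ ftc H b b''
  rw [fiSup_mul]
  refine iSup_le fun n => ?_
  rw [fmul_iSup]
  refine iSup_le fun m => ?_
  calc pw H n b b' * pw H m b' b'' ≤ rcomp (pw H n) (pw H m) b b'' :=
        le_iSup (fun b' => pw H n b b' * pw H m b' b'') b'
    _ = pw H (n + m + 1) b b'' := by rw [pw_comp]
    _ ≤ ftc H b b'' := pw_le_ftc H (n + m + 1) b b''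

lemma pw_delta {H δ : B → B → L} (h : rcomp H δ ≤ rcomp δ H) (n : ℕ) :
    rcomp (pw H n) δ ≤ rcomp δ (pw H n) := by
  induction n with
  | zero => exact h
  | succ n ih =>
    show rcomp (rcomp (pw H n) H) δ ≤ rcomp δ (rcomp (pw H n) H)
    calc rcomp (rcomp (pw H n) H) δ = rcomp (pw H n) (rcomp H δ) := rcomp_assoc _ _ _
      _ ≤ rcomp (pw H n) (rcomp δ H) := rcomp_mono le_rfl h
      _ = rcomp (rcomp (pw H n) δ) H := (rcomp_assoc _ _ _).symm
      _ ≤ rcomp (rcomp δ (pw H n)) H := rcomp_mono ih le_rfl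
      _ = rcomp δ (rcomp (pw H n) H) := rcomp_assoc _ _ _

lemma ftc_delta {H δ : B → B → L} (h : rcomp H δ ≤ rcomp δ H) :
    rcomp (ftc H) δ ≤ rcomp δ (ftc H) := by
  intro a c
  refine iSup_le fun b => ?_
  show (⨆ n, pw H n a b) * δ b c ≤ rcomp δ (ftc H) a c
  rw [fiSup_mul]
  refine iSup_le fun n => ?_
  calc pw H n a b * δ b c ≤ rcomp (pw H n) δ a c :=
        le_iSup (fun b => pw H n a b * δ b c) b
    _ ≤ rcomp δ (pw H n) a c := pw_delta h n a c
    _ ≤ rcomp δ (ftc H) a c := rcomp_mono le_rfl (pw_le_ftc H n) a c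

lemma pw_tau {H : B → B → L} {τ : B → L} (h : rscomp H τ ≤ τ) (n : ℕ) :
    rscomp (pw H n) τ ≤ τ := by
  induction n with
  | zero => exact h
  | succ n ih =>
    show rscomp (rcomp (pw H n) H) τ ≤ τ
    rw [rscomp_assoc]
    exact le_trans (rscomp_mono le_rfl h) ih

lemma ftc_tau {H : B → B → L} {τ : B → L} (h : rscomp H τ ≤ τ) :
    rscomp (ftc H) τ ≤ τ := by
  intro b
  refine iSup_le fun b' => ?_
  show (⨆ n, pw H n b b') * τ b' ≤ τ b
  rw [fiSup_mul]
  exact iSup_le fun n =>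
    le_trans (le_iSup (fun b' => pw H n b b' * τ b') b') (pw_tau h n b)

lemma ftc_refl {H : B → B → L} (h : Refl1 H) : Refl1 (ftc H) := fun b =>
  le_antisymm (fle_one _) (by rw [← h b]; exact pw_le_ftc H 0 b b)

end AuxProofs

section MainProofs

variable {L X A B C : Type*} [CompleteResiduatedLattice L]

private lemma ufb_trans_aux {MA : FuzzyAutomaton L X A} {MB : FuzzyAutomaton L X B}
    {MC : FuzzyAutomaton L X C} {φ : A → B → L} {ψ : B → C → L} {G : B → B → L}
    (hφlf : IsLFun φ) (hφsur : IsSurj φ) (hψlf : IsLFun ψ) (hψsur : IsSurj ψ)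
    (hφ : IsForwardBisim MA MB φ) (hψ : IsForwardBisim MB MC ψ)
    (hGrefl : Refl1 G) (hGsym : inv G = G) (hGtrans : rcomp G G ≤ G)
    (hGδ : ∀ x, rcomp G (MB.δx x) ≤ rcomp (MB.δx x) G)
    (hGτ : rscomp G MB.τ ≤ MB.τ)
    (hEG : rcomp (inv φ) φ ≤ G) (hFG : rcomp ψ (inv ψ) ≤ G) :
    UFBEquiv MA MC := by
  obtain ⟨⟨hφ1, hφ2, hφ3⟩, ⟨hφ1', hφ2', hφ3'⟩⟩ := hφ
  obtain ⟨⟨hψ1, hψ2, hψ3⟩, ⟨hψ1', hψ2', hψ3'⟩⟩ := hψ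
  have hb1 : MB.σ ≤ scomp MA.σ φ := hφ1'
  have hb2 : ∀ x, rcomp φ (MB.δx x) ≤ rcomp (MA.δx x) φ := hφ2'
  have hb3 : rscomp φ MB.τ ≤ MA.τ := hφ3'
  have hd1 : MC.σ ≤ scomp MB.σ ψ := hψ1'
  have hd2 : ∀ x, rcomp ψ (MC.δx x) ≤ rcomp (MB.δx x) ψ := hψ2'
  have hd3 : rscomp ψ MC.τ ≤ MB.τ := hψ3'
  have habsorb : ∀ W : B → C → L, rcomp G (rcomp G W) ≤ rcomp G W := fun W => by
    rw [← rcomp_assoc]; exact rcomp_mono hGtrans le_rfl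
  have hstepE : ∀ W : B → C → L, rcomp (inv φ) (rcomp φ W) ≤ rcomp G W := fun W => by
    rw [← rcomp_assoc]; exact rcomp_mono hEG le_rfl
  have hstepF : ∀ W : B → C → L, rcomp ψ (rcomp (inv ψ) W) ≤ rcomp G W := fun W => by
    rw [← rcomp_assoc]; exact rcomp_mono hFG le_rfl
  have hinv : inv (rcomp φ (rcomp G ψ)) = rcomp (inv ψ) (rcomp G (inv φ)) := by
    rw [inv_rcomp, inv_rcomp, hGsym, rcomp_assoc]
  refine ⟨rcomp φ (rcomp G ψ), ⟨?_, ?_, ?_⟩, ⟨?_, ?_, ?_⟩, ⟨?_, ?_, ?_⟩⟩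
  · -- PFF
    show rcomp (rcomp (rcomp φ (rcomp G ψ)) (inv (rcomp φ (rcomp G ψ))))
        (rcomp φ (rcomp G ψ)) ≤ rcomp φ (rcomp G ψ)
    rw [hinv]
    simp only [rcomp_assoc]
    refine rcomp_mono le_rfl ?_
    calc rcomp G (rcomp ψ (rcomp (inv ψ) (rcomp G (rcomp (inv φ) (rcomp φ (rcomp G ψ))))))
        ≤ rcomp G (rcomp ψ (rcomp (inv ψ) (rcomp G (rcomp G (rcomp G ψ))))) :=
          rcomp_mono le_rfl (rcomp_mono le_rfl (rcomp_mono le_rfl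
            (rcomp_mono le_rfl (hstepE _))))
      _ ≤ rcomp G (rcomp ψ (rcomp (inv ψ) (rcomp G (rcomp G ψ)))) :=
          rcomp_mono le_rfl (rcomp_mono le_rfl (rcomp_mono le_rfl (habsorb _)))
      _ ≤ rcomp G (rcomp ψ (rcomp (inv ψ) (rcomp G ψ))) :=
          rcomp_mono le_rfl (rcomp_mono le_rfl (rcomp_mono le_rfl (habsorb _)))
      _ ≤ rcomp G (rcomp G (rcomp G ψ)) := rcomp_mono le_rfl (hstepF _)
      _ ≤ rcomp G (rcomp G ψ) := habsorb _
      _ ≤ rcomp G ψ := habsorb _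
  · -- L-function
    intro a
    obtain ⟨b, hb⟩ := hφlf a
    obtain ⟨c, hc⟩ := hψlf b
    refine ⟨c, fone_of_le ?_⟩
    calc (1 : L) = φ a b * (G b b * ψ b c) := by rw [hb, hc, hGrefl b, one_mul, one_mul]
      _ ≤ φ a b * rcomp G ψ b c :=
          fmul_mono le_rfl (le_iSup (fun b' => G b b' * ψ b' c) b)
      _ ≤ rcomp φ (rcomp G ψ) a c := le_iSup (fun b => φ a b * rcomp G ψ b c) b
  · -- surjective
    intro c
    obtain ⟨b, hb⟩ := hψsur c
    obtain ⟨a, ha⟩ := hφsur b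
    refine ⟨a, fone_of_le ?_⟩
    calc (1 : L) = φ a b * (G b b * ψ b c) := by rw [ha, hb, hGrefl b, one_mul, one_mul]
      _ ≤ φ a b * rcomp G ψ b c :=
          fmul_mono le_rfl (le_iSup (fun b' => G b b' * ψ b' c) b)
      _ ≤ rcomp φ (rcomp G ψ) a c := le_iSup (fun b => φ a b * rcomp G ψ b c) b
  · -- σ condition forward
    show MA.σ ≤ scomp MC.σ (inv (rcomp φ (rcomp G ψ)))
    rw [hinv]
    calc MA.σ ≤ scomp MB.σ (inv φ) := hφ1
      _ ≤ scomp (scomp MC.σ (inv ψ)) (inv φ) := scomp_mono hψ1 le_rfl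
      _ = scomp MC.σ (rcomp (inv ψ) (inv φ)) := scomp_assoc _ _ _
      _ ≤ scomp MC.σ (rcomp (inv ψ) (rcomp G (inv φ))) :=
          scomp_mono le_rfl (rcomp_mono le_rfl (le_rcomp_of_refl hGrefl (inv φ)))
  · -- δ condition forward
    intro x
    show rcomp (inv (rcomp φ (rcomp G ψ))) (MA.δx x)
        ≤ rcomp (MC.δx x) (inv (rcomp φ (rcomp G ψ)))
    rw [hinv]
    calc rcomp (rcomp (inv ψ) (rcomp G (inv φ))) (MA.δx x)
        = rcomp (inv ψ) (rcomp G (rcomp (inv φ) (MA.δx x))) := by simp only [rcomp_assoc]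
      _ ≤ rcomp (inv ψ) (rcomp G (rcomp (MB.δx x) (inv φ))) :=
          rcomp_mono le_rfl (rcomp_mono le_rfl (hφ2 x))
      _ = rcomp (inv ψ) (rcomp (rcomp G (MB.δx x)) (inv φ)) := by simp only [rcomp_assoc]
      _ ≤ rcomp (inv ψ) (rcomp (rcomp (MB.δx x) G) (inv φ)) :=
          rcomp_mono le_rfl (rcomp_mono (hGδ x) le_rfl)
      _ = rcomp (rcomp (inv ψ) (MB.δx x)) (rcomp G (inv φ)) := by simp only [rcomp_assoc]
      _ ≤ rcomp (rcomp (MC.δx x) (inv ψ)) (rcomp G (inv φ)) := rcomp_mono (hψ2 x) le_rfl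
      _ = rcomp (MC.δx x) (rcomp (inv ψ) (rcomp G (inv φ))) := rcomp_assoc _ _ _
  · -- τ condition forward
    show rscomp (inv (rcomp φ (rcomp G ψ))) MA.τ ≤ MC.τ
    rw [hinv]
    calc rscomp (rcomp (inv ψ) (rcomp G (inv φ))) MA.τ
        = rscomp (inv ψ) (rscomp G (rscomp (inv φ) MA.τ)) := by
          rw [rscomp_assoc, rscomp_assoc]
      _ ≤ rscomp (inv ψ) (rscomp G MB.τ) := rscomp_mono le_rfl (rscomp_mono le_rfl hφ3)
      _ ≤ rscomp (inv ψ) MB.τ := rscomp_mono le_rfl hGτ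
      _ ≤ MC.τ := hψ3
  · -- σ condition backward
    show MC.σ ≤ scomp MA.σ (inv (inv (rcomp φ (rcomp G ψ))))
    calc MC.σ ≤ scomp MB.σ ψ := hd1
      _ ≤ scomp (scomp MA.σ φ) ψ := scomp_mono hb1 le_rfl
      _ = scomp MA.σ (rcomp φ ψ) := scomp_assoc _ _ _
      _ ≤ scomp MA.σ (rcomp φ (rcomp G ψ)) :=
          scomp_mono le_rfl (rcomp_mono le_rfl (le_rcomp_of_refl hGrefl ψ))
  · -- δ condition backward
    intro x
    show rcomp (inv (inv (rcomp φ (rcomp G ψ)))) (MC.δx x)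
        ≤ rcomp (MA.δx x) (inv (inv (rcomp φ (rcomp G ψ))))
    calc rcomp (rcomp φ (rcomp G ψ)) (MC.δx x)
        = rcomp φ (rcomp G (rcomp ψ (MC.δx x))) := by simp only [rcomp_assoc]
      _ ≤ rcomp φ (rcomp G (rcomp (MB.δx x) ψ)) :=
          rcomp_mono le_rfl (rcomp_mono le_rfl (hd2 x))
      _ = rcomp φ (rcomp (rcomp G (MB.δx x)) ψ) := by simp only [rcomp_assoc]
      _ ≤ rcomp φ (rcomp (rcomp (MB.δx x) G) ψ) :=
          rcomp_mono le_rfl (rcomp_mono (hGδ x) le_rfl)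
      _ = rcomp (rcomp φ (MB.δx x)) (rcomp G ψ) := by simp only [rcomp_assoc]
      _ ≤ rcomp (rcomp (MA.δx x) φ) (rcomp G ψ) := rcomp_mono (hb2 x) le_rfl
      _ = rcomp (MA.δx x) (rcomp φ (rcomp G ψ)) := rcomp_assoc _ _ _
  · -- τ condition backward
    show rscomp (inv (inv (rcomp φ (rcomp G ψ)))) MC.τ ≤ MA.τ
    calc rscomp (rcomp φ (rcomp G ψ)) MC.τ
        = rscomp φ (rscomp G (rscomp ψ MC.τ)) := by simp only [rscomp_assoc]
      _ ≤ rscomp φ (rscomp G MB.τ) := rscomp_mono le_rfl (rscomp_mono le_rfl hd3)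
      _ ≤ rscomp φ MB.τ := rscomp_mono le_rfl hGτ
      _ ≤ MA.τ := hb3

private lemma ufb_refl (MA : FuzzyAutomaton L X A) : UFBEquiv MA MA := by
  refine ⟨fdiag, ⟨?_, ?_, ?_⟩, ⟨?_, ?_, ?_⟩, ⟨?_, ?_, ?_⟩⟩
  · show rcomp (rcomp fdiag (inv fdiag)) fdiag ≤ fdiag
    rw [inv_fdiag, rcomp_fdiag, rcomp_fdiag]
  · exact fun a => ⟨a, fdiag_refl a⟩
  · exact fun a => ⟨a, fdiag_refl a⟩
  · show MA.σ ≤ scomp MA.σ (inv fdiag)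
    rw [inv_fdiag, scomp_fdiag]
  · intro x
    show rcomp (inv fdiag) (MA.δx x) ≤ rcomp (MA.δx x) (inv fdiag)
    rw [inv_fdiag, fdiag_rcomp, rcomp_fdiag]
  · show rscomp (inv fdiag) MA.τ ≤ MA.τ
    rw [inv_fdiag, fdiag_rscomp]
  · show MA.σ ≤ scomp MA.σ (inv (inv fdiag))
    simp only [inv_fdiag]
    rw [scomp_fdiag]
  · intro x
    show rcomp (inv (inv fdiag)) (MA.δx x) ≤ rcomp (MA.δx x) (inv (inv fdiag))
    simp only [inv_fdiag]
    rw [fdiag_rcomp, rcomp_fdiag]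
  · show rscomp (inv (inv fdiag)) MA.τ ≤ MA.τ
    simp only [inv_fdiag]
    rw [fdiag_rscomp]

private lemma ufb_symm {MA : FuzzyAutomaton L X A} {MB : FuzzyAutomaton L X B}
    (h : UFBEquiv MA MB) : UFBEquiv MB MA := by
  obtain ⟨φ, ⟨hpff, hlf, hsur⟩, hfb⟩ := h
  refine ⟨inv φ, ⟨?_, hsur, hlf⟩, hfb.2, hfb.1⟩
  show rcomp (rcomp (inv φ) (inv (inv φ))) (inv φ) ≤ inv φ
  have h2 : inv (rcomp (rcomp φ (inv φ)) φ) ≤ inv φ := finv_mono hpff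
  rw [inv_rcomp, inv_rcomp, ← rcomp_assoc] at h2
  exact h2

private lemma ufb_trans {MA : FuzzyAutomaton L X A} {MB : FuzzyAutomaton L X B}
    {MC : FuzzyAutomaton L X C}
    (h1 : UFBEquiv MA MB) (h2 : UFBEquiv MB MC) : UFBEquiv MA MC := by
  obtain ⟨φ, ⟨-, hφlf, hφsur⟩, hφ⟩ := h1
  obtain ⟨ψ, ⟨-, hψlf, hψsur⟩, hψ⟩ := h2
  have hb2 : ∀ x, rcomp φ (MB.δx x) ≤ rcomp (MA.δx x) φ := hφ.2.2.1
  have hb3 : rscomp φ MB.τ ≤ MA.τ := hφ.2.2.2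
  have ha2 : ∀ x, rcomp (inv φ) (MA.δx x) ≤ rcomp (MB.δx x) (inv φ) := hφ.1.2.1
  have ha3 : rscomp (inv φ) MA.τ ≤ MB.τ := hφ.1.2.2
  have hc2 : ∀ x, rcomp (inv ψ) (MB.δx x) ≤ rcomp (MC.δx x) (inv ψ) := hψ.1.2.1
  have hc3 : rscomp (inv ψ) MB.τ ≤ MC.τ := hψ.1.2.2
  have hd2 : ∀ x, rcomp ψ (MC.δx x) ≤ rcomp (MB.δx x) ψ := hψ.2.2.1
  have hd3 : rscomp ψ MC.τ ≤ MB.τ := hψ.2.2.2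
  -- the fuzzy equivalences E = φ⁻¹∘φ and F = ψ∘ψ⁻¹ on B
  have hEsym : inv (rcomp (inv φ) φ) = rcomp (inv φ) φ := by rw [inv_rcomp]; rfl
  have hFsym : inv (rcomp ψ (inv ψ)) = rcomp ψ (inv ψ) := by rw [inv_rcomp]; rfl
  have hErefl : Refl1 (rcomp (inv φ) φ) := by
    intro b
    obtain ⟨a, ha⟩ := hφsur b
    refine fone_of_le ?_
    calc (1 : L) = φ a b * φ a b := by rw [ha, one_mul]
      _ ≤ rcomp (inv φ) φ b b := le_iSup (fun a' => inv φ b a' * φ a' b) a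
  have hFrefl : Refl1 (rcomp ψ (inv ψ)) := by
    intro b
    obtain ⟨c, hc⟩ := hψlf b
    refine fone_of_le ?_
    calc (1 : L) = ψ b c * ψ b c := by rw [hc, one_mul]
      _ ≤ rcomp ψ (inv ψ) b b := le_iSup (fun c' => ψ b c' * inv ψ c' b) c
  have hEδ : ∀ x, rcomp (rcomp (inv φ) φ) (MB.δx x)
      ≤ rcomp (MB.δx x) (rcomp (inv φ) φ) := by
    intro x
    calc rcomp (rcomp (inv φ) φ) (MB.δx x)
        = rcomp (inv φ) (rcomp φ (MB.δx x)) := rcomp_assoc _ _ _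
      _ ≤ rcomp (inv φ) (rcomp (MA.δx x) φ) := rcomp_mono le_rfl (hb2 x)
      _ = rcomp (rcomp (inv φ) (MA.δx x)) φ := (rcomp_assoc _ _ _).symm
      _ ≤ rcomp (rcomp (MB.δx x) (inv φ)) φ := rcomp_mono (ha2 x) le_rfl
      _ = rcomp (MB.δx x) (rcomp (inv φ) φ) := rcomp_assoc _ _ _
  have hFδ : ∀ x, rcomp (rcomp ψ (inv ψ)) (MB.δx x)
      ≤ rcomp (MB.δx x) (rcomp ψ (inv ψ)) := by
    intro x
    calc rcomp (rcomp ψ (inv ψ)) (MB.δx x)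
        = rcomp ψ (rcomp (inv ψ) (MB.δx x)) := rcomp_assoc _ _ _
      _ ≤ rcomp ψ (rcomp (MC.δx x) (inv ψ)) := rcomp_mono le_rfl (hc2 x)
      _ = rcomp (rcomp ψ (MC.δx x)) (inv ψ) := (rcomp_assoc _ _ _).symm
      _ ≤ rcomp (rcomp (MB.δx x) ψ) (inv ψ) := rcomp_mono (hd2 x) le_rfl
      _ = rcomp (MB.δx x) (rcomp ψ (inv ψ)) := rcomp_assoc _ _ _
  have hEτ : rscomp (rcomp (inv φ) φ) MB.τ ≤ MB.τ := by
    calc rscomp (rcomp (inv φ) φ) MB.τ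
        = rscomp (inv φ) (rscomp φ MB.τ) := rscomp_assoc _ _ _
      _ ≤ rscomp (inv φ) MA.τ := rscomp_mono le_rfl hb3
      _ ≤ MB.τ := ha3
  have hFτ : rscomp (rcomp ψ (inv ψ)) MB.τ ≤ MB.τ := by
    calc rscomp (rcomp ψ (inv ψ)) MB.τ
        = rscomp ψ (rscomp (inv ψ) MB.τ) := rscomp_assoc _ _ _
      _ ≤ rscomp ψ MC.τ := rscomp_mono le_rfl hc3
      _ ≤ MB.τ := hd3
  -- H = E ⊔ F
  have hHsym : inv (rcomp (inv φ) φ ⊔ rcomp ψ (inv ψ))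
      = rcomp (inv φ) φ ⊔ rcomp ψ (inv ψ) := by
    have h : inv (rcomp (inv φ) φ ⊔ rcomp ψ (inv ψ))
        = inv (rcomp (inv φ) φ) ⊔ inv (rcomp ψ (inv ψ)) := rfl
    rw [h, hEsym, hFsym]
  have hHrefl : Refl1 (rcomp (inv φ) φ ⊔ rcomp ψ (inv ψ)) := by
    intro b
    refine fone_of_le ?_
    calc (1 : L) = rcomp (inv φ) φ b b := (hErefl b).symm
      _ ≤ _ := le_sup_left
  have hHδ : ∀ x, rcomp (rcomp (inv φ) φ ⊔ rcomp ψ (inv ψ)) (MB.δx x)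
      ≤ rcomp (MB.δx x) (rcomp (inv φ) φ ⊔ rcomp ψ (inv ψ)) := by
    intro x
    rw [rcomp_sup_left]
    exact sup_le (le_trans (hEδ x) (rcomp_mono le_rfl le_sup_left))
      (le_trans (hFδ x) (rcomp_mono le_rfl le_sup_right))
  have hHτ : rscomp (rcomp (inv φ) φ ⊔ rcomp ψ (inv ψ)) MB.τ ≤ MB.τ := by
    rw [rscomp_sup_left]
    exact sup_le hEτ hFτ
  exact ufb_trans_aux hφlf hφsur hψlf hψsur hφ hψ
    (ftc_refl hHrefl) (ftc_symm hHsym) (ftc_trans _)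
    (fun x => ftc_delta (hHδ x)) (ftc_tau hHτ)
    (le_trans le_sup_left (pw_le_ftc _ 0)) (le_trans le_sup_right (pw_le_ftc _ 0))

end MainProofs


/-- UFB-equivalence is an equivalence -/
theorem ufbEquiv_equivalence {L X A B C : Type*} [CompleteResiduatedLattice L]
    [Nonempty A] [Nonempty B] [Nonempty C]
    (MA : FuzzyAutomaton L X A) (MB : FuzzyAutomaton L X B)
    (MC : FuzzyAutomaton L X C) :
    UFBEquiv MA MA ∧
    (UFBEquiv MA MB → UFBEquiv MB MA) ∧
    (UFBEquiv MA MB → UFBEquiv MB MC → UFBEquiv MA MC) := by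
  exact ⟨ufb_refl MA, ufb_symm, ufb_trans⟩

end FuzzyAutomataBisim
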